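/- arXiv:2003.11132 — 2 statements merged into one kernel-verified Lean document; each statement's English description precedes it below -/
import Mathlib

section
/- Let 𝒯 be a tree ensemble on ℝ^p and let Λ(z^L,z^R) denote the minimum number of leaves of a decision tree faithful to 𝒯 on the region (z^L,z^R). If (z^L,z^R) and (z̄^L,z̄^R) are two regions such that z^L ≤ z̄^L ≤ z̄^R ≤ z^R componentwise, then Λ(z̄^L,z̄^R) ≤ Λ(z^L,z^R). -/
/-- A decision tree on `ℝ^p`: either a leaf labeled with a class `c : ℕ`,
or an internal node splitting on feature `j` with threshold `t`. -/
inductive DTree (p : ℕ) : Type where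
  | leaf (c : ℕ) : DTree p
  | node (j : Fin p) (t : ℝ) (L R : DTree p) : DTree p

namespace DTree

/-- Evaluation of a decision tree at a point `x : ℝ^p`. -/
noncomputable def eval {p : ℕ} : DTree p → (Fin p → ℝ) → ℕ
  | leaf c, _ => c
  | node j t L R, x => if x j ≤ t then L.eval x else R.eval x

/-- Depth `Φ(T)` of a decision tree. -/
def depth {p : ℕ} : DTree p → ℕ
  | leaf _ => 0
  | node _ _ L R => 1 + max L.depth R.depth

/-- Number of leaves `L(T)` of a decision tree. -/
def leaves {p : ℕ} : DTree p → ℕ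
  | leaf _ => 1
  | node _ _ L R => L.leaves + R.leaves

/-- The set of splits `(j, t)` occurring at internal nodes of a tree. -/
def splits {p : ℕ} : DTree p → Set (Fin p × ℝ)
  | leaf _ => ∅
  | node j t L R => insert (j, t) (L.splits ∪ R.splits)

end DTree

/-- A tree ensemble: a finite nonempty family of decision trees with positive weights. -/
structure Ensemble (p : ℕ) : Type where
  m : ℕ
  m_pos : 0 < m
  tree : Fin m → DTree p
  weight : Fin m → ℝ
  weight_pos : ∀ i, 0 < weight i

namespace Ensemble

/-- Total weight of the trees voting for class `c` at point `x`. -/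
noncomputable def score {p : ℕ} (E : Ensemble p) (x : Fin p → ℝ) (c : ℕ) : ℝ :=
  ∑ i ∈ Finset.univ.filter (fun i => (E.tree i).eval x = c), E.weight i

/-- The decision function of the ensemble: the smallest class maximizing the weighted vote. -/
noncomputable def F {p : ℕ} (E : Ensemble p) (x : Fin p → ℝ) : ℕ :=
  sInf {c : ℕ | ∀ c' : ℕ, E.score x c' ≤ E.score x c}

/-- The set `H j` of thresholds appearing in splits on feature `j` in trees of the ensemble. -/
def H {p : ℕ} (E : Ensemble p) (j : Fin p) : Set ℝ :=
  {t : ℝ | ∃ i, (j, t) ∈ (E.tree i).splits}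

end Ensemble

/-- `T` is faithful to the ensemble `E` on the set `S`. -/
def Faithful {p : ℕ} (T : DTree p) (E : Ensemble p) (S : Set (Fin p → ℝ)) : Prop :=
  ∀ x ∈ S, T.eval x = E.F x
/-- A cell: for each feature `j`, an index in `{0, …, n j}` (0-indexed version of `{1, …, |H_j|+1}`). -/
abbrev Cell {p : ℕ} (n : Fin p → ℕ) : Type := ∀ j, Fin (n j + 1)

/-- The open box `B(z)` associated with a cell `z`, given for each feature `j` the
increasing enumeration `h j : Fin (n j) → ℝ` of the thresholds: `x j` lies strictly above
every threshold of index `< z j` and strictly below every threshold of index `≥ z j`. -/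
def Box {p : ℕ} (n : Fin p → ℕ) (h : ∀ j, Fin (n j) → ℝ) (z : Cell n) : Set (Fin p → ℝ) :=
  {x | ∀ j, (∀ k : Fin (n j), (k : ℕ) < (z j : ℕ) → h j k < x j) ∧
            (∀ k : Fin (n j), (z j : ℕ) ≤ (k : ℕ) → x j < h j k)}

/-- The cell `z` is enclosed in the region `(zL, zR)`. -/
def Encl {p : ℕ} {n : Fin p → ℕ} (zL zR z : Cell n) : Prop :=
  ∀ j, (zL j : ℕ) ≤ (z j : ℕ) ∧ (z j : ℕ) ≤ (zR j : ℕ)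

/-- The subset of `ℝ^p` covered by the region `(zL, zR)`: the union of the boxes of the
cells it encloses. -/
def RegionSet {p : ℕ} (n : Fin p → ℕ) (h : ∀ j, Fin (n j) → ℝ) (zL zR : Cell n) :
    Set (Fin p → ℝ) :=
  ⋃ z ∈ {z : Cell n | Encl zL zR z}, Box n h z

/-- `Φ(zL, zR)`: the minimum depth of a decision tree faithful to `E` on the region `(zL, zR)`. -/
noncomputable def Phi {p : ℕ} (E : Ensemble p) (n : Fin p → ℕ) (h : ∀ j, Fin (n j) → ℝ)
    (zL zR : Cell n) : ℕ :=
  sInf {d : ℕ | ∃ T : DTree p, Faithful T E (RegionSet n h zL zR) ∧ T.depth = d}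

/-- `Λ(zL, zR)`: the minimum number of leaves of a decision tree faithful to `E` on `(zL, zR)`. -/
noncomputable def Lam {p : ℕ} (E : Ensemble p) (n : Fin p → ℕ) (h : ∀ j, Fin (n j) → ℝ)
    (zL zR : Cell n) : ℕ :=
  sInf {d : ℕ | ∃ T : DTree p, Faithful T E (RegionSet n h zL zR) ∧ T.leaves = d}

/-- `z^R_{jl}`: replace the `j`-th coordinate of `zR` by `l`. -/
def splitR {p : ℕ} {n : Fin p → ℕ} (zR : Cell n) (j : Fin p) (l : Fin (n j)) : Cell n :=
  Function.update zR j l.castSucc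

/-- `z^L_{jl}`: replace the `j`-th coordinate of `zL` by `l + 1`. -/
def splitL {p : ℕ} {n : Fin p → ℕ} (zL : Cell n) (j : Fin p) (l : Fin (n j)) : Cell n :=
  Function.update zL j l.succ

/-- The cells `z` and `z'` have the same (weighted majority) class under `E`. -/
def SameClass {p : ℕ} (E : Ensemble p) (n : Fin p → ℕ) (h : ∀ j, Fin (n j) → ℝ)
    (z z' : Cell n) : Prop :=
  ∀ x ∈ Box n h z, ∀ y ∈ Box n h z', E.F x = E.F y

open Classical in
/-- The indicator `𝟙_{jl}(z^L, z^R)`. -/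
noncomputable def ind {p : ℕ} (E : Ensemble p) (n : Fin p → ℕ) (h : ∀ j, Fin (n j) → ℝ)
    (zL zR : Cell n) (j : Fin p) (l : Fin (n j)) : ℕ :=
  if Phi E n h zL (splitR zR j l) = 0 ∧ Phi E n h (splitL zL j l) zR = 0 ∧ SameClass E n h zL zR
  then 0 else 1

/- Any function of the leaf values of finitely many trees is computed by a single tree: graft a copy
of the second tree onto every leaf of the first, and so on. In particular some tree agrees with the
ensemble's decision function on all of `ℝ^p`, so `Λ` is the minimum of a nonempty set, and it can
only decrease when the region shrinks. -/

namespace DTree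

variable {p : ℕ}

def bind : DTree p → (ℕ → DTree p) → DTree p
  | leaf c, k => k c
  | node j t L R, k => node j t (L.bind k) (R.bind k)

theorem eval_bind (T : DTree p) (k : ℕ → DTree p) (x : Fin p → ℝ) :
    (T.bind k).eval x = (k (T.eval x)).eval x := by
  induction T with
  | leaf c => rfl
  | node j t L R ihL ihR =>
    simp only [bind, eval]
    split_ifs <;> assumption

theorem exists_eval_eq_comp : ∀ {m : ℕ} (t : Fin m → DTree p) (g : (Fin m → ℕ) → ℕ),
    ∃ T : DTree p, ∀ x, T.eval x = g (fun i => (t i).eval x)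
  | 0, _, g => ⟨leaf (g Fin.elim0), fun _ => congrArg g (funext fun i => i.elim0)⟩
  | _ + 1, t, g => by
    choose T hT using fun c => exists_eval_eq_comp (Fin.tail t) (fun v => g (Fin.cons c v))
    refine ⟨(t 0).bind T, fun x => ?_⟩
    rw [eval_bind, hT]
    exact congrArg g (Fin.cons_self_tail fun i => (t i).eval x)

end DTree

namespace Ensemble

variable {p : ℕ}

noncomputable def vote (E : Ensemble p) (v : Fin E.m → ℕ) : ℕ :=
  sInf {c : ℕ | ∀ c' : ℕ, ∑ i ∈ Finset.univ.filter (v · = c'), E.weight i ≤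
    ∑ i ∈ Finset.univ.filter (v · = c), E.weight i}

theorem F_eq_vote (E : Ensemble p) (x : Fin p → ℝ) :
    E.F x = E.vote (fun i => (E.tree i).eval x) :=
  rfl

theorem exists_tree_eval_eq_F (E : Ensemble p) : ∃ T : DTree p, ∀ x, T.eval x = E.F x := by
  simpa only [F_eq_vote] using DTree.exists_eval_eq_comp E.tree E.vote

end Ensemble

section Lam

variable {p : ℕ} {E : Ensemble p} {n : Fin p → ℕ} {h : ∀ j, Fin (n j) → ℝ}

theorem Faithful.mono {T : DTree p} {S S' : Set (Fin p → ℝ)} (hT : Faithful T E S)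
    (hS : S' ⊆ S) : Faithful T E S' :=
  fun x hx => hT x (hS hx)

theorem regionSet_mono {zL zR zL' zR' : Cell n} (hL : ∀ j, (zL j : ℕ) ≤ (zL' j : ℕ))
    (hR : ∀ j, (zR' j : ℕ) ≤ (zR j : ℕ)) : RegionSet n h zL' zR' ⊆ RegionSet n h zL zR :=
  Set.biUnion_subset_biUnion_left fun _ hz j => ⟨(hL j).trans (hz j).1, (hz j).2.trans (hR j)⟩

theorem lam_le_leaves {T : DTree p} {zL zR : Cell n}
    (hT : Faithful T E (RegionSet n h zL zR)) : Lam E n h zL zR ≤ T.leaves :=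
  Nat.sInf_le ⟨T, hT, rfl⟩

theorem exists_faithful_leaves_eq_lam (zL zR : Cell n) :
    ∃ T : DTree p, Faithful T E (RegionSet n h zL zR) ∧ T.leaves = Lam E n h zL zR := by
  obtain ⟨T, hT⟩ := E.exists_tree_eval_eq_F
  have hne : {d | ∃ T : DTree p, Faithful T E (RegionSet n h zL zR) ∧ T.leaves = d}.Nonempty :=
    ⟨T.leaves, T, fun x _ => hT x, rfl⟩
  exact Nat.sInf_mem hne

end Lam

theorem lam_monotone_general {p : ℕ} (E : Ensemble p) (n : Fin p → ℕ) (h : ∀ j, Fin (n j) → ℝ)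
    (zL zR zL' zR' : Cell n)
    (h1 : ∀ j, (zL j : ℕ) ≤ (zL' j : ℕ))
    (h3 : ∀ j, (zR' j : ℕ) ≤ (zR j : ℕ)) :
    Lam E n h zL' zR' ≤ Lam E n h zL zR := by
  obtain ⟨T, hT, hleaves⟩ := exists_faithful_leaves_eq_lam (E := E) (h := h) zL zR
  exact hleaves ▸ lam_le_leaves (hT.mono (regionSet_mono h1 h3))

/-- If `zL ≤ z̄L ≤ z̄R ≤ zR` componentwise, then the minimum number of
leaves of a faithful tree satisfies `Λ(z̄L, z̄R) ≤ Λ(zL, zR)`. -/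
theorem lam_monotone {p : ℕ} (E : Ensemble p) (n : Fin p → ℕ) (h : ∀ j, Fin (n j) → ℝ)
    (hmono : ∀ j, StrictMono (h j)) (hcov : ∀ j, E.H j = Set.range (h j))
    (zL zR zL' zR' : Cell n)
    (h1 : ∀ j, (zL j : ℕ) ≤ (zL' j : ℕ)) (h2 : ∀ j, (zL' j : ℕ) ≤ (zR' j : ℕ))
    (h3 : ∀ j, (zR' j : ℕ) ≤ (zR j : ℕ)) :
    Lam E n h zL' zR' ≤ Lam E n h zL zR :=
  lam_monotone_general E n h zL zR zL' zR' h1 h3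
end

section
/- Let P be a 3-CNF propositional formula with k ≥ 1 clauses over variables x_1,…,x_l, and let 𝒯_P be the associated tree ensemble on ℝ^l. Then the single-leaf decision tree labeled with class 0 is faithful to 𝒯_P on ℝ^l if and only if P is unsatisfiable; equivalently, the minimum depth of a decision tree faithful to 𝒯_P on ℝ^l equals 0 if P is unsatisfiable, and is at least 1 if P is satisfiable. -/
/-- A 3-clause over boolean variables indexed by `Fin l`: three literals on three distinct
variables, each literal given by a variable `var i` and a polarity `sign i`
(`true` for a positive literal). -/
structure Clause (l : ℕ) : Type where
  var : Fin 3 → Fin l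
  var_inj : Function.Injective var
  sign : Fin 3 → Bool

/-- A boolean assignment `ν` satisfies the clause iff some literal is satisfied. -/
def Clause.sat {l : ℕ} (C : Clause l) (ν : Fin l → Bool) : Prop :=
  ∃ i : Fin 3, ν (C.var i) = C.sign i

/-- The assignment `ν_x` encoded by `x ∈ ℝ^l` (`ν_x(i) = true` iff `x i > 1/2`) satisfies
the clause. -/
def Clause.satAt {l : ℕ} (C : Clause l) (x : Fin l → ℝ) : Prop :=
  ∃ i : Fin 3, (C.sign i = true ↔ 1 / 2 < x (C.var i))

/-- A 3-CNF formula with `k ≥ 1` clauses over variables indexed by `Fin l`. -/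
structure CNF (l : ℕ) : Type where
  k : ℕ
  k_pos : 0 < k
  clause : Fin k → Clause l

/-- A boolean assignment satisfies the formula iff it satisfies every clause. -/
def CNF.sat {l : ℕ} (P : CNF l) (ν : Fin l → Bool) : Prop :=
  ∀ i, (P.clause i).sat ν

/-- The assignment `ν_x` encoded by `x ∈ ℝ^l` satisfies the formula. -/
def CNF.satAt {l : ℕ} (P : CNF l) (x : Fin l → ℝ) : Prop :=
  ∀ i, (P.clause i).satAt x

/-- Leaf of the clause tree corresponding to the assignment `a` of the three clause
variables: class `1` (True) unless `a` falsifies the clause, in which case class `0`. -/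
def litLeaf {l : ℕ} (C : Clause l) (a : Fin 3 → Bool) : DTree l :=
  DTree.leaf (if ∃ i : Fin 3, a i = C.sign i then 1 else 0)

/-- The complete depth-3 decision tree of a clause: it splits successively on the three
variables of the clause, each with threshold `1/2` (left = False, right = True); its eight
leaves are labeled `1` except the unique leaf corresponding to the falsifying assignment,
which is labeled `0`. -/
noncomputable def clauseTree {l : ℕ} (C : Clause l) : DTree l :=
  DTree.node (C.var 0) (1 / 2)
    (DTree.node (C.var 1) (1 / 2)
      (DTree.node (C.var 2) (1 / 2)
        (litLeaf C ![false, false, false]) (litLeaf C ![false, false, true]))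
      (DTree.node (C.var 2) (1 / 2)
        (litLeaf C ![false, true, false]) (litLeaf C ![false, true, true])))
    (DTree.node (C.var 1) (1 / 2)
      (DTree.node (C.var 2) (1 / 2)
        (litLeaf C ![true, false, false]) (litLeaf C ![true, false, true]))
      (DTree.node (C.var 2) (1 / 2)
        (litLeaf C ![true, true, false]) (litLeaf C ![true, true, true])))

/-- The tree ensemble `𝒯_P` associated with a 3-CNF formula `P` with `k` clauses:
`2k − 1` unit-weight trees, namely the `k` clause trees together with `k − 1` single-leaf
trees of class `0` (False). -/
noncomputable def cnfEnsemble {l : ℕ} (P : CNF l) : Ensemble l where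
  m := 2 * P.k - 1
  m_pos := by have := P.k_pos; omega
  tree := fun i =>
    if h : (i : ℕ) < P.k then clauseTree (P.clause ⟨i, h⟩) else DTree.leaf 0
  weight := fun _ => 1
  weight_pos := fun _ => one_pos

/-!
Each clause tree outputs `1` exactly when the encoded assignment satisfies its clause, so the
vote for `1` counts the satisfied clauses while the `k − 1` constant trees vote `0`. Hence the
ensemble outputs `1` iff all `k` clauses hold, i.e. it computes `P` on the encoded assignment.
If `P` is unsatisfiable this is the constant `0`; if it is satisfiable, the ensemble takes both
values (every single clause can be falsified), so no leaf is faithful, while a complete tree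
splitting on every variable at `1/2` is.
-/

open Finset

namespace DTree

variable {p : ℕ}

lemma depth_eq_zero_iff {T : DTree p} : T.depth = 0 ↔ ∃ c, T = leaf c := by
  cases T <;> simp [depth]

theorem exists_eval_eq_of_dependsOn (t : ℝ) (s : Finset (Fin p)) :
    ∀ f : (Fin p → Bool) → ℕ, DependsOn f s →
      ∃ T : DTree p, ∀ x, T.eval x = f (fun i => decide (t < x i)) := by
  induction s using Finset.induction_on with
  | empty =>
    intro f hf
    exact ⟨leaf (f fun _ => false), fun x => hf (by simp)⟩
  | insert j s _ ih =>
    intro f hf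
    have hrestrict : ∀ b, DependsOn (fun a => f (Function.update a j b)) s := by
      intro b a a' h
      refine hf fun i hi => ?_
      by_cases hij : i = j
      · simp [hij]
      · simpa [Function.update_of_ne hij] using h i (by simpa [hij] using hi)
    obtain ⟨T₀, hT₀⟩ := ih _ (hrestrict false)
    obtain ⟨T₁, hT₁⟩ := ih _ (hrestrict true)
    refine ⟨node j t T₀ T₁, fun x => ?_⟩
    have hbranch : ∀ b, decide (t < x j) = b →
        f (Function.update (fun i => decide (t < x i)) j b) = f (fun i => decide (t < x i)) := by
      rintro b rfl
      rw [Function.update_eq_self]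
    by_cases hx : x j ≤ t
    · simp [eval, hx, hT₀, hbranch false (by simpa using hx)]
    · simp [eval, hx, hT₁, hbranch true (by simpa using hx)]

theorem exists_eval_eq (t : ℝ) (f : (Fin p → Bool) → ℕ) :
    ∃ T : DTree p, ∀ x, T.eval x = f (fun i => decide (t < x i)) :=
  exists_eval_eq_of_dependsOn t univ f (by simpa using dependsOn_univ f)

end DTree

namespace Ensemble

variable {p : ℕ} (E : Ensemble p) (x : Fin p → ℝ)

lemma F_eq_of_forall_score_lt {c : ℕ} (h : ∀ c' ≠ c, E.score x c' < E.score x c) :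
    E.F x = c := by
  have hmax : {c | ∀ c', E.score x c' ≤ E.score x c} = {c} := by
    ext d
    simp only [Set.mem_ofPred_eq, Set.mem_singleton_iff]
    refine ⟨fun hd => ?_, ?_⟩
    · by_contra hdc
      exact (h d hdc).not_ge (hd c)
    · rintro rfl c'
      by_cases hc' : c' = d
      · rw [hc']
      · exact (h c' hc').le
  rw [F, hmax, csInf_singleton]

lemma score_eq_zero_of_forall_eval_ne {c : ℕ} (h : ∀ i, (E.tree i).eval x ≠ c) :
    E.score x c = 0 := by
  simp [score, h]

lemma score_zero_add_score_one (h : ∀ i, (E.tree i).eval x ≤ 1) :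
    E.score x 0 + E.score x 1 = ∑ i, E.weight i := by
  rw [score, score, ← sum_filter_add_sum_filter_not univ (fun i => (E.tree i).eval x = 0)]
  congr 2
  ext i
  have := h i
  simp only [mem_filter, mem_univ, true_and]
  omega

end Ensemble

section CNF

variable {l : ℕ}

noncomputable def toAssignment (x : Fin l → ℝ) : Fin l → Bool := fun i => decide (1 / 2 < x i)

def ofAssignment (ν : Fin l → Bool) : Fin l → ℝ := fun i => if ν i then 1 else 0

lemma toAssignment_ofAssignment (ν : Fin l → Bool) : toAssignment (ofAssignment ν) = ν := by
  funext i
  cases h : ν i <;> norm_num [toAssignment, ofAssignment, h]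

instance (C : Clause l) : DecidablePred C.sat := fun ν =>
  inferInstanceAs (Decidable (∃ i, ν (C.var i) = C.sign i))

instance (P : CNF l) : DecidablePred P.sat := fun ν =>
  inferInstanceAs (Decidable (∀ i, (P.clause i).sat ν))

lemma Clause.exists_not_sat (C : Clause l) : ∃ ν, ¬ C.sat ν := by
  refine ⟨fun j => !C.sign (Function.invFun C.var j), fun ⟨i, hi⟩ => ?_⟩
  simp [Function.leftInverse_invFun C.var_inj i] at hi

lemma clauseTree_eval (C : Clause l) (x : Fin l → ℝ) :
    (clauseTree C).eval x = if C.sat (toAssignment x) then 1 else 0 := by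
  have hleaf : (clauseTree C).eval x = (litLeaf C fun i => toAssignment x (C.var i)).eval x := by
    simp only [clauseTree, DTree.eval]
    split_ifs <;> congr <;> funext i <;> fin_cases i <;> simp_all [toAssignment]
  rw [hleaf]
  rfl

variable (P : CNF l) (x : Fin l → ℝ)

lemma cnfEnsemble_tree_eval (i : Fin (cnfEnsemble P).m) :
    ((cnfEnsemble P).tree i).eval x =
      if h : (i : ℕ) < P.k then (if (P.clause ⟨i, h⟩).sat (toAssignment x) then 1 else 0)
      else 0 := by
  by_cases h : (i : ℕ) < P.k <;> simp [cnfEnsemble, h, clauseTree_eval, DTree.eval]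

lemma cnfEnsemble_score_one :
    (cnfEnsemble P).score x 1 = #{j | (P.clause j).sat (toAssignment x)} := by
  have hk : P.k ≤ (cnfEnsemble P).m := by
    change P.k ≤ 2 * P.k - 1
    have := P.k_pos
    omega
  have hvote : (univ.filter fun i => ((cnfEnsemble P).tree i).eval x = 1) =
      (univ.filter fun j => (P.clause j).sat (toAssignment x)).map (Fin.castLEEmb hk) := by
    ext i
    simp only [mem_filter, mem_univ, true_and, mem_map, Fin.castLEEmb_apply,
      cnfEnsemble_tree_eval]
    constructor
    · intro hi
      split_ifs at hi with h h'
      exact ⟨⟨i, h⟩, h', rfl⟩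
    · rintro ⟨j, hj, rfl⟩
      simp [j.isLt, hj]
  rw [Ensemble.score, hvote, sum_map]
  simp [cnfEnsemble]

lemma cnfEnsemble_score_zero_add_score_one :
    (cnfEnsemble P).score x 0 + (cnfEnsemble P).score x 1 = 2 * P.k - 1 := by
  rw [Ensemble.score_zero_add_score_one]
  · change ∑ _i : Fin (2 * P.k - 1), (1 : ℝ) = _
    have := P.k_pos
    rw [sum_const, card_fin, nsmul_one, Nat.cast_sub (by omega)]
    push_cast
    rfl
  · intro i
    rw [cnfEnsemble_tree_eval]
    split_ifs <;> omega

lemma cnfEnsemble_score_eq_zero {c : ℕ} (hc : 2 ≤ c) : (cnfEnsemble P).score x c = 0 := by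
  refine Ensemble.score_eq_zero_of_forall_eval_ne _ _ fun i => ?_
  rw [cnfEnsemble_tree_eval]
  split_ifs <;> omega

theorem cnfEnsemble_F : (cnfEnsemble P).F x = if P.sat (toAssignment x) then 1 else 0 := by
  have hk : (1 : ℝ) ≤ P.k := by exact_mod_cast P.k_pos
  have hsum := cnfEnsemble_score_zero_add_score_one P x
  have hone := cnfEnsemble_score_one P x
  have hhigh : ∀ c, (cnfEnsemble P).score x (c + 2) = 0 := fun c =>
    cnfEnsemble_score_eq_zero P x (Nat.le_add_left 2 c)
  split_ifs with hsat
  · have hall : #{j | (P.clause j).sat (toAssignment x)} = P.k := by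
      simp [filter_true_of_mem fun j _ => hsat j]
    rw [hall] at hone
    refine Ensemble.F_eq_of_forall_score_lt _ _ fun c hc => ?_
    rcases c with _ | _ | c
    · linarith
    · contradiction
    · rw [hhigh c]; linarith
  · obtain ⟨j, hj⟩ : ∃ j, ¬ (P.clause j).sat (toAssignment x) := not_forall.1 hsat
    have hsome : (#{j | (P.clause j).sat (toAssignment x)} : ℝ) + 1 ≤ P.k := by
      have hlt : #{j | (P.clause j).sat (toAssignment x)} < #(univ : Finset (Fin P.k)) :=
        card_lt_card (filter_ssubset.2 ⟨j, mem_univ _, hj⟩)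
      rw [card_fin] at hlt
      exact_mod_cast hlt
    refine Ensemble.F_eq_of_forall_score_lt _ _ fun c hc => ?_
    rcases c with _ | _ | c
    · contradiction
    · linarith
    · rw [hhigh c]
      linarith

lemma cnfEnsemble_F_ofAssignment (ν : Fin l → Bool) :
    (cnfEnsemble P).F (ofAssignment ν) = if P.sat ν then 1 else 0 := by
  rw [cnfEnsemble_F, toAssignment_ofAssignment]

theorem not_faithful_leaf_of_sat {ν : Fin l → Bool} (hν : P.sat ν) (c : ℕ) :
    ¬ Faithful (DTree.leaf c) (cnfEnsemble P) Set.univ := by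
  intro hT
  obtain ⟨μ, hμ⟩ := (P.clause ⟨0, P.k_pos⟩).exists_not_sat
  have hone := hT (ofAssignment ν) trivial
  have hzero := hT (ofAssignment μ) trivial
  rw [cnfEnsemble_F_ofAssignment, if_pos hν] at hone
  rw [cnfEnsemble_F_ofAssignment, if_neg fun h => hμ (h _)] at hzero
  simp only [DTree.eval] at hone hzero
  omega

theorem faithful_leaf_zero_iff :
    Faithful (DTree.leaf 0) (cnfEnsemble P) Set.univ ↔ ¬ ∃ ν, P.sat ν := by
  refine ⟨fun hT ⟨ν, hν⟩ => not_faithful_leaf_of_sat P hν 0 hT, fun hunsat x _ => ?_⟩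
  rw [cnfEnsemble_F, if_neg fun h => hunsat ⟨_, h⟩]
  rfl

theorem exists_faithful : ∃ T : DTree l, Faithful T (cnfEnsemble P) Set.univ := by
  obtain ⟨T, hT⟩ := DTree.exists_eval_eq (1 / 2) fun ν => if P.sat ν then 1 else 0
  exact ⟨T, fun x _ => (hT x).trans (cnfEnsemble_F P x).symm⟩

end CNF

/-- The single-leaf tree of class `0` is faithful to `𝒯_P` on `ℝ^l` iff `P`
is unsatisfiable; equivalently, the minimum depth of a decision tree faithful to `𝒯_P` on
`ℝ^l` equals `0` if `P` is unsatisfiable and is at least `1` if `P` is satisfiable. -/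
theorem cnf_born_again_reduction {l : ℕ} (P : CNF l) :
    (Faithful (DTree.leaf 0) (cnfEnsemble P) Set.univ ↔ ¬ ∃ ν : Fin l → Bool, P.sat ν) ∧
    ((¬ ∃ ν : Fin l → Bool, P.sat ν) →
      sInf {d : ℕ | ∃ T : DTree l, Faithful T (cnfEnsemble P) Set.univ ∧ T.depth = d} = 0) ∧
    ((∃ ν : Fin l → Bool, P.sat ν) →
      1 ≤ sInf {d : ℕ | ∃ T : DTree l, Faithful T (cnfEnsemble P) Set.univ ∧ T.depth = d}) := by
  refine ⟨faithful_leaf_zero_iff P, fun hunsat => ?_, fun ⟨ν, hν⟩ => ?_⟩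
  · exact Nat.sInf_eq_zero.2 (Or.inl ⟨_, (faithful_leaf_zero_iff P).2 hunsat, rfl⟩)
  · obtain ⟨T, hT⟩ := exists_faithful P
    refine le_csInf ⟨_, T, hT, rfl⟩ ?_
    rintro _ ⟨T', hT', rfl⟩
    refine Nat.one_le_iff_ne_zero.2 fun hdepth => ?_
    obtain ⟨c, rfl⟩ := DTree.depth_eq_zero_iff.1 hdepth
    exact not_faithful_leaf_of_sat P hν c hT'
end
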